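/- Let γ: [0,∞) → (0,∞) be C^2 with γ(0) = γ'(0) = 1, γ increasing and γ'' < 0. Let t > 0, let h: [0,t] → ℝ be continuous with |h(s)| ≤ -γ''(s)/γ(s), and let F: [0,t] → ℝ be continuous. If y solves y''(s) = h(s)y(s) + F(s) on [0,t] with y(0) = y'(0) and y(t) = 0, then sup_{s∈[0,t]} |y(s)|/γ(s) ≤ ∫_0^t |F(s)| (t-s)/γ(t) ds, and sup_{s∈[0,t)} |y(s)|/(t-s) ≤ ∫_0^t |F(s)| γ(s)/γ(t) ds. -/

import Mathlib

/-!
Reduction of order: with `M(σ) = ∫₀^σ γ|F|` and `V(s) = ∫ₛᵗ M/γ²`, the function `u = γ V` solves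
`u'' = (γ''/γ) u - |F|`, `u(0) = u'(0)`, `u(t) = 0`. For `w = V - y/γ` the flux `W = γ² w'` has
`W' = -γ (|F| + F) - y (γ h - γ'')`, which is `≤ 0` wherever `w < 0`: there `y > 0`, and
`γ h - γ'' ≥ 0` by the bound on `h`. Since also `W(0) = 0` and `w(t) = 0`, a minimum principle
gives `w ≥ 0`, i.e. `y ≤ γ V`; likewise `-y ≤ γ V`. Concavity of `γ` gives
`γ(s) ∫ₛᵗ γ⁻² ≤ (t - s)/γ(t)`, and the two estimates follow from `V(s) ≤ V(0)`, where integration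
by parts gives `V(0) = ∫₀ᵗ γ(τ)|F(τ)| ∫_τ^t γ⁻²`, and from `V(s) ≤ M(t) ∫ₛᵗ γ⁻²`.
-/

open Set MeasureTheory intervalIntegral

section Calculus

variable {f : ℝ → ℝ} {a b c x : ℝ}

theorem hasDerivAt_integral_right_of_continuousOn (hf : ContinuousOn f (Icc a b))
    (hc : c ∈ Icc a b) (hx : x ∈ Ioo a b) :
    HasDerivAt (fun u => ∫ τ in c..u, f τ) (f x) x :=
  integral_hasDerivAt_right
    ((hf.mono (uIcc_subset_Icc hc (Ioo_subset_Icc_self hx))).intervalIntegrable)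
    ((hf.mono Ioo_subset_Icc_self).stronglyMeasurableAtFilter isOpen_Ioo x hx)
    (hf.continuousAt (Icc_mem_nhds hx.1 hx.2))

theorem hasDerivAt_integral_left_of_continuousOn (hf : ContinuousOn f (Icc a b))
    (hc : c ∈ Icc a b) (hx : x ∈ Ioo a b) :
    HasDerivAt (fun u => ∫ τ in u..c, f τ) (-f x) x :=
  integral_hasDerivAt_left
    ((hf.mono (uIcc_subset_Icc (Ioo_subset_Icc_self hx) hc)).intervalIntegrable)
    ((hf.mono Ioo_subset_Icc_self).stronglyMeasurableAtFilter isOpen_Ioo x hx)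
    (hf.continuousAt (Icc_mem_nhds hx.1 hx.2))

theorem exists_first_nonneg_of_continuousOn {w : ℝ → ℝ} (hab : a ≤ b)
    (hw : ContinuousOn w (Icc a b)) (ha : w a < 0) (hb : 0 ≤ w b) :
    ∃ c ∈ Ioc a b, 0 ≤ w c ∧ ∀ x ∈ Ico a c, w x < 0 := by
  set S := Icc a b ∩ w ⁻¹' Ici 0
  have hS : IsClosed S := hw.preimage_isClosed_of_isClosed isClosed_Icc isClosed_Ici
  have hSbdd : BddBelow S := ⟨a, fun x hx => hx.1.1⟩
  have hcS : sInf S ∈ S := hS.csInf_mem ⟨b, right_mem_Icc.2 hab, hb⟩ hSbdd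
  refine ⟨sInf S, ⟨hcS.1.1.lt_of_ne ?_, hcS.1.2⟩, hcS.2, fun x hx => ?_⟩
  · rintro hac
    exact (hac ▸ hcS.2 : 0 ≤ w a).not_gt ha
  · by_contra! hx0
    exact (csInf_le hSbdd ⟨⟨hx.1, hx.2.le.trans hcS.1.2⟩, hx0⟩).not_gt hx.2

/-- A minimum principle for `w` whose flux `W = p w'` (`p > 0`) can only decrease where `w < 0`. -/
theorem nonneg_of_flux_antitone_of_neg {w W W' p : ℝ → ℝ}
    (hw : ContinuousOn w (Icc a b)) (hW : ContinuousOn W (Icc a b))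
    (hw' : ∀ x ∈ Ioo a b, HasDerivAt w (W x / p x) x) (hp : ∀ x ∈ Ioo a b, 0 < p x)
    (hW' : ∀ x ∈ Ioo a b, HasDerivAt W (W' x) x)
    (hW'_nonpos : ∀ x ∈ Ioo a b, w x < 0 → W' x ≤ 0)
    (ha : W a ≤ 0) (hb : 0 ≤ w b) :
    ∀ x ∈ Icc a b, 0 ≤ w x := by
  intro x hx
  by_contra! hx0
  obtain ⟨s, hs, hmin⟩ := isCompact_Icc.exists_isMinOn ⟨x, hx⟩ hw
  have hws : w s < 0 := (hmin hx).trans_lt hx0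
  have hsb : s < b := hs.2.lt_of_ne (by rintro rfl; linarith)
  have hWs : W s ≤ 0 := by
    rcases hs.1.eq_or_lt with rfl | has
    · exact ha
    · have hcrit := (hmin.isLocalMin (Icc_mem_nhds has hsb)).hasDerivAt_eq_zero (hw' s ⟨has, hsb⟩)
      exact ((div_eq_zero_iff.1 hcrit).resolve_right (hp s ⟨has, hsb⟩).ne').le
  obtain ⟨c, hc, hwc, hneg⟩ :=
    exists_first_nonneg_of_continuousOn hs.2 (hw.mono (Icc_subset_Icc hs.1 le_rfl)) hws hb
  have hsub : Icc s c ⊆ Icc a b := Icc_subset_Icc hs.1 hc.2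
  have hsubo : Ioo s c ⊆ Ioo a b := Ioo_subset_Ioo hs.1 hc.2
  have hW_anti : AntitoneOn W (Icc s c) := by
    refine antitoneOn_of_hasDerivWithinAt_nonpos (f' := W') (convex_Icc s c) (hW.mono hsub)
      ?_ ?_ <;> rw [interior_Icc]
    · exact fun y hy => (hW' y (hsubo hy)).hasDerivWithinAt
    · exact fun y hy => hW'_nonpos y (hsubo hy) (hneg y (Ioo_subset_Ico_self hy))
  have hw_anti : AntitoneOn w (Icc s c) := by
    refine antitoneOn_of_hasDerivWithinAt_nonpos (f' := fun y => W y / p y) (convex_Icc s c)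
      (hw.mono hsub) ?_ ?_ <;> rw [interior_Icc]
    · exact fun y hy => (hw' y (hsubo hy)).hasDerivWithinAt
    · intro y hy
      have hWy : W y ≤ 0 :=
        (hW_anti (left_mem_Icc.2 hc.1.le) (Ioo_subset_Icc_self hy) hy.1.le).trans hWs
      exact div_nonpos_of_nonpos_of_nonneg hWy (hp y (hsubo hy)).le
  have := hw_anti (left_mem_Icc.2 hc.1.le) (right_mem_Icc.2 hc.1.le) hc.1.le
  linarith

theorem ContinuousOn.inv_sq_of_pos {γ : ℝ → ℝ} {s : Set ℝ} (hγ : ContinuousOn γ s)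
    (hγpos : ∀ x ∈ s, 0 < γ x) : ContinuousOn (fun x => (γ x ^ 2)⁻¹) s :=
  (hγ.pow 2).inv₀ fun x hx => (pow_pos (hγpos x hx) 2).ne'

/-- Concavity puts `γ` above its chords, whence `(x - a) / (γ a γ x)` grows faster than
`∫ₐˣ γ⁻²`. -/
theorem mul_integral_inv_sq_le_of_concaveOn {γ : ℝ → ℝ} (hab : a ≤ b)
    (hγ : ConcaveOn ℝ (Icc a b) γ) (hγd : DifferentiableOn ℝ γ (Icc a b))
    (hγpos : ∀ x ∈ Icc a b, 0 < γ x) :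
    γ a * ∫ r in a..b, (γ r ^ 2)⁻¹ ≤ (b - a) / γ b := by
  have hγa := hγpos a (left_mem_Icc.2 hab)
  have hint : ∫ r in a..b, (γ r ^ 2)⁻¹ ≤ (b - a) / (γ a * γ b) - (a - a) / (γ a * γ a) := by
    refine integral_le_sub_of_hasDeriv_right_of_le (g := fun x => (x - a) / (γ a * γ x))
      (g' := fun x => (1 * (γ a * γ x) - (x - a) * (γ a * deriv γ x)) / (γ a * γ x) ^ 2) hab
      ((continuousOn_id.sub continuousOn_const).div (continuousOn_const.mul hγd.continuousOn)
        fun x hx => (mul_pos hγa (hγpos x hx)).ne')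
      (fun x hx => ?_) (hγd.continuousOn.inv_sq_of_pos hγpos).integrableOn_Icc (fun x hx => ?_)
    · have hγx := hγpos x (Ioo_subset_Icc_self hx)
      have hdx := hγd.differentiableAt (Icc_mem_nhds hx.1 hx.2)
      exact (((hasDerivAt_id x).sub_const a).div (hdx.hasDerivAt.const_mul (γ a))
        (mul_pos hγa hγx).ne').hasDerivWithinAt
    · have hγx := hγpos x (Ioo_subset_Icc_self hx)
      have htan : deriv γ x * (x - a) ≤ γ x - γ a := by
        have := hγ.deriv_le_slope (left_mem_Icc.2 hab) (Ioo_subset_Icc_self hx) hx.1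
          (hγd.differentiableAt (Icc_mem_nhds hx.1 hx.2))
        rwa [slope_def_field, le_div_iff₀ (sub_pos.2 hx.1)] at this
      calc (γ x ^ 2)⁻¹ = (γ a * γ a) / (γ a * γ x) ^ 2 := by field_simp
        _ ≤ _ := by gcongr; nlinarith [mul_le_mul_of_nonneg_left htan hγa.le]
  calc γ a * ∫ r in a..b, (γ r ^ 2)⁻¹
      ≤ γ a * ((b - a) / (γ a * γ b) - (a - a) / (γ a * γ a)) := by gcongr
    _ = (b - a) / γ b := by field_simp; ring

end Calculus

noncomputable def weightedMass (γ F : ℝ → ℝ) (s : ℝ) : ℝ :=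
  ∫ τ in (0 : ℝ)..s, γ τ * |F τ|

/-- `γ * comparisonQuotient γ F t` is the solution of `u'' = (γ''/γ) u - |F|`, `u(0) = u'(0)`,
`u(t) = 0`, obtained by reduction of order. -/
noncomputable def comparisonQuotient (γ F : ℝ → ℝ) (t s : ℝ) : ℝ :=
  ∫ σ in s..t, weightedMass γ F σ * (γ σ ^ 2)⁻¹

section Comparison

variable {γ F : ℝ → ℝ} {t : ℝ}

theorem continuousOn_weightedMass (ht : 0 ≤ t) (hγ : ContinuousOn γ (Icc 0 t))
    (hF : ContinuousOn F (Icc 0 t)) : ContinuousOn (weightedMass γ F) (Icc 0 t) := by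
  have := continuousOn_primitive_interval (μ := volume) (f := fun τ => γ τ * |F τ|) (a := 0)
    (b := t) (by rw [uIcc_of_le ht]; exact (hγ.mul hF.abs).integrableOn_Icc)
  rwa [uIcc_of_le ht] at this

theorem hasDerivAt_weightedMass (hγ : ContinuousOn γ (Icc 0 t)) (hF : ContinuousOn F (Icc 0 t))
    {x : ℝ} (hx : x ∈ Ioo 0 t) : HasDerivAt (weightedMass γ F) (γ x * |F x|) x :=
  hasDerivAt_integral_right_of_continuousOn (hγ.mul hF.abs)
    (left_mem_Icc.2 (hx.1.trans hx.2).le) hx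

theorem weightedMass_nonneg (hγpos : ∀ s ∈ Icc 0 t, 0 < γ s) {σ : ℝ} (hσ : σ ∈ Icc 0 t) :
    0 ≤ weightedMass γ F σ :=
  integral_nonneg hσ.1 fun τ hτ => mul_nonneg (hγpos τ ⟨hτ.1, hτ.2.trans hσ.2⟩).le (abs_nonneg _)

theorem weightedMass_le (hγ : ContinuousOn γ (Icc 0 t)) (hγpos : ∀ s ∈ Icc 0 t, 0 < γ s)
    (hF : ContinuousOn F (Icc 0 t)) {σ : ℝ} (hσ : σ ∈ Icc 0 t) :
    weightedMass γ F σ ≤ weightedMass γ F t :=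
  integral_mono_interval le_rfl hσ.1 hσ.2
    (ae_restrict_of_forall_mem measurableSet_Ioc fun τ hτ =>
      mul_nonneg (hγpos τ (Ioc_subset_Icc_self hτ)).le (abs_nonneg _))
    ((hγ.mul hF.abs).intervalIntegrable_of_Icc (hσ.1.trans hσ.2))

theorem continuousOn_comparisonQuotient_integrand (ht : 0 ≤ t) (hγ : ContinuousOn γ (Icc 0 t))
    (hγpos : ∀ s ∈ Icc 0 t, 0 < γ s) (hF : ContinuousOn F (Icc 0 t)) :
    ContinuousOn (fun σ => weightedMass γ F σ * (γ σ ^ 2)⁻¹) (Icc 0 t) :=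
  (continuousOn_weightedMass ht hγ hF).mul (hγ.inv_sq_of_pos hγpos)

theorem continuousOn_comparisonQuotient (ht : 0 ≤ t) (hγ : ContinuousOn γ (Icc 0 t))
    (hγpos : ∀ s ∈ Icc 0 t, 0 < γ s) (hF : ContinuousOn F (Icc 0 t)) :
    ContinuousOn (comparisonQuotient γ F t) (Icc 0 t) := by
  have := continuousOn_primitive_interval_left (μ := volume) (a := 0) (b := t)
    (by rw [uIcc_of_le ht]
        exact (continuousOn_comparisonQuotient_integrand ht hγ hγpos hF).integrableOn_Icc)
  rwa [uIcc_of_le ht] at this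

theorem hasDerivAt_comparisonQuotient (hγ : ContinuousOn γ (Icc 0 t))
    (hγpos : ∀ s ∈ Icc 0 t, 0 < γ s) (hF : ContinuousOn F (Icc 0 t)) {x : ℝ} (hx : x ∈ Ioo 0 t) :
    HasDerivAt (comparisonQuotient γ F t) (-(weightedMass γ F x * (γ x ^ 2)⁻¹)) x :=
  hasDerivAt_integral_left_of_continuousOn
    (continuousOn_comparisonQuotient_integrand (hx.1.trans hx.2).le hγ hγpos hF)
    (right_mem_Icc.2 (hx.1.trans hx.2).le) hx

theorem comparisonQuotient_nonneg (hγpos : ∀ s ∈ Icc 0 t, 0 < γ s) {s : ℝ} (hs : s ∈ Icc 0 t) :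
    0 ≤ comparisonQuotient γ F t s :=
  integral_nonneg hs.2 fun σ hσ =>
    mul_nonneg (weightedMass_nonneg hγpos ⟨hs.1.trans hσ.1, hσ.2⟩) (by positivity)

theorem comparisonQuotient_le_comparisonQuotient_zero (hγ : ContinuousOn γ (Icc 0 t))
    (hγpos : ∀ s ∈ Icc 0 t, 0 < γ s) (hF : ContinuousOn F (Icc 0 t)) {s : ℝ} (hs : s ∈ Icc 0 t) :
    comparisonQuotient γ F t s ≤ comparisonQuotient γ F t 0 :=
  integral_mono_interval hs.1 hs.2 le_rfl
    (ae_restrict_of_forall_mem measurableSet_Ioc fun σ hσ =>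
      mul_nonneg (weightedMass_nonneg hγpos (Ioc_subset_Icc_self hσ)) (by positivity))
    ((continuousOn_comparisonQuotient_integrand (hs.1.trans hs.2) hγ hγpos hF
      ).intervalIntegrable_of_Icc (hs.1.trans hs.2))

theorem comparisonQuotient_le_weightedMass_mul (hγ : ContinuousOn γ (Icc 0 t))
    (hγpos : ∀ s ∈ Icc 0 t, 0 < γ s) (hF : ContinuousOn F (Icc 0 t)) {s : ℝ} (hs : s ∈ Icc 0 t) :
    comparisonQuotient γ F t s ≤ weightedMass γ F t * ∫ r in s..t, (γ r ^ 2)⁻¹ := by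
  have hsub : Icc s t ⊆ Icc 0 t := Icc_subset_Icc hs.1 le_rfl
  rw [← intervalIntegral.integral_const_mul]
  exact integral_mono_on hs.2
    (((continuousOn_comparisonQuotient_integrand (hs.1.trans hs.2) hγ hγpos hF).mono
      hsub).intervalIntegrable_of_Icc hs.2)
    ((continuousOn_const.mul ((hγ.inv_sq_of_pos hγpos).mono hsub)).intervalIntegrable_of_Icc hs.2)
    fun σ hσ => mul_le_mul_of_nonneg_right (weightedMass_le hγ hγpos hF (hsub hσ)) (by positivity)

theorem continuousOn_integral_inv_sq (ht : 0 ≤ t) (hγ : ContinuousOn γ (Icc 0 t))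
    (hγpos : ∀ s ∈ Icc 0 t, 0 < γ s) :
    ContinuousOn (fun s => ∫ r in s..t, (γ r ^ 2)⁻¹) (Icc 0 t) := by
  have := continuousOn_primitive_interval_left (μ := volume) (a := 0) (b := t)
    (by rw [uIcc_of_le ht]; exact (hγ.inv_sq_of_pos hγpos).integrableOn_Icc)
  rwa [uIcc_of_le ht] at this

theorem comparisonQuotient_zero_eq (ht : 0 ≤ t) (hγ : ContinuousOn γ (Icc 0 t))
    (hγpos : ∀ s ∈ Icc 0 t, 0 < γ s) (hF : ContinuousOn F (Icc 0 t)) :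
    comparisonQuotient γ F t 0 = ∫ τ in (0 : ℝ)..t, γ τ * |F τ| * ∫ r in τ..t, (γ r ^ 2)⁻¹ := by
  have hinv := hγ.inv_sq_of_pos hγpos
  have hparts := integral_mul_deriv_eq_deriv_mul_of_hasDerivAt
    (u := weightedMass γ F) (v := fun x => -∫ r in x..t, (γ r ^ 2)⁻¹)
    (u' := fun x => γ x * |F x|) (v' := fun x => (γ x ^ 2)⁻¹)
    (by rw [uIcc_of_le ht]; exact continuousOn_weightedMass ht hγ hF)
    (by rw [uIcc_of_le ht]; exact (continuousOn_integral_inv_sq ht hγ hγpos).neg)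
    (fun x hx => by
      rw [min_eq_left ht, max_eq_right ht] at hx; exact hasDerivAt_weightedMass hγ hF hx)
    (fun x hx => by
      rw [min_eq_left ht, max_eq_right ht] at hx
      exact (hasDerivAt_integral_left_of_continuousOn hinv (right_mem_Icc.2 ht) hx).neg.congr_deriv
        (neg_neg _))
    ((hγ.mul hF.abs).intervalIntegrable_of_Icc ht) (hinv.intervalIntegrable_of_Icc ht)
  have hM0 : weightedMass γ F 0 = 0 := integral_same
  simpa only [comparisonQuotient, integral_same, neg_zero, mul_zero, hM0, zero_mul, sub_zero,
    mul_neg, intervalIntegral.integral_neg, zero_sub, neg_neg] using hparts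

theorem comparisonQuotient_le_integral (ht : 0 ≤ t) (hγ : ContinuousOn γ (Icc 0 t))
    (hγpos : ∀ s ∈ Icc 0 t, 0 < γ s) (hF : ContinuousOn F (Icc 0 t))
    (hγQ : ∀ s ∈ Icc 0 t, γ s * ∫ r in s..t, (γ r ^ 2)⁻¹ ≤ (t - s) / γ t) {s : ℝ}
    (hs : s ∈ Icc 0 t) :
    comparisonQuotient γ F t s ≤ ∫ τ in (0 : ℝ)..t, |F τ| * ((t - τ) / γ t) := by
  refine (comparisonQuotient_le_comparisonQuotient_zero hγ hγpos hF hs).trans ?_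
  rw [comparisonQuotient_zero_eq ht hγ hγpos hF]
  refine integral_mono_on ht
    (((hγ.mul hF.abs).mul (continuousOn_integral_inv_sq ht hγ hγpos)).intervalIntegrable_of_Icc ht)
    ((hF.abs.mul ((continuousOn_const.sub continuousOn_id).div_const _)).intervalIntegrable_of_Icc
      ht) fun τ hτ => ?_
  calc γ τ * |F τ| * ∫ r in τ..t, (γ r ^ 2)⁻¹ = |F τ| * (γ τ * ∫ r in τ..t, (γ r ^ 2)⁻¹) := by ring
    _ ≤ |F τ| * ((t - τ) / γ t) := mul_le_mul_of_nonneg_left (hγQ τ hτ) (abs_nonneg _)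

theorem mul_comparisonQuotient_le (ht : 0 ≤ t) (hγ : ContinuousOn γ (Icc 0 t))
    (hγpos : ∀ s ∈ Icc 0 t, 0 < γ s) (hF : ContinuousOn F (Icc 0 t))
    (hγQ : ∀ s ∈ Icc 0 t, γ s * ∫ r in s..t, (γ r ^ 2)⁻¹ ≤ (t - s) / γ t) {s : ℝ}
    (hs : s ∈ Icc 0 t) :
    γ s * comparisonQuotient γ F t s ≤ (∫ τ in (0 : ℝ)..t, |F τ| * (γ τ / γ t)) * (t - s) := by
  have hmass : ∫ τ in (0 : ℝ)..t, |F τ| * (γ τ / γ t) = weightedMass γ F t / γ t := by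
    rw [weightedMass, ← intervalIntegral.integral_div]
    exact integral_congr fun τ _ => by ring
  rw [hmass]
  calc γ s * comparisonQuotient γ F t s
      ≤ γ s * (weightedMass γ F t * ∫ r in s..t, (γ r ^ 2)⁻¹) := mul_le_mul_of_nonneg_left
        (comparisonQuotient_le_weightedMass_mul hγ hγpos hF hs) (hγpos s hs).le
    _ = weightedMass γ F t * (γ s * ∫ r in s..t, (γ r ^ 2)⁻¹) := by ring
    _ ≤ weightedMass γ F t * ((t - s) / γ t) := mul_le_mul_of_nonneg_left (hγQ s hs)
        (weightedMass_nonneg hγpos (right_mem_Icc.2 ht))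
    _ = weightedMass γ F t / γ t * (t - s) := by ring

end Comparison

section Solution

variable {γ h F y y' : ℝ → ℝ} {t : ℝ}

theorem le_mul_comparisonQuotient (ht : 0 ≤ t) (hγd : Differentiable ℝ γ)
    (hγd' : Differentiable ℝ (deriv γ)) (hγpos : ∀ s ∈ Icc 0 t, 0 < γ s)
    (hγ0 : deriv γ 0 = γ 0) (hF : ContinuousOn F (Icc 0 t))
    (hbound : ∀ s ∈ Icc 0 t, |h s| ≤ -deriv (deriv γ) s / γ s)
    (hy : ∀ s ∈ Icc 0 t, HasDerivAt y (y' s) s)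
    (hy' : ∀ s ∈ Icc 0 t, HasDerivAt y' (h s * y s + F s) s)
    (hinit : y 0 = y' 0) (hend : y t = 0) :
    ∀ s ∈ Icc 0 t, y s ≤ γ s * comparisonQuotient γ F t s := by
  set M := weightedMass γ F
  set V := comparisonQuotient γ F t
  have hγ : ContinuousOn γ (Icc 0 t) := hγd.continuous.continuousOn
  have hycont : ContinuousOn y (Icc 0 t) := fun s hs => (hy s hs).continuousAt.continuousWithinAt
  have hy'cont : ContinuousOn y' (Icc 0 t) :=
    fun s hs => (hy' s hs).continuousAt.continuousWithinAt
  have hw_nonneg := nonneg_of_flux_antitone_of_neg (w := fun s => V s - y s / γ s)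
    (W := fun s => -M s - (y' s * γ s - y s * deriv γ s)) (p := fun s => γ s ^ 2)
    (W' := fun s => -(γ s * (|F s| + F s)) - y s * (γ s * h s - deriv (deriv γ) s))
    ((continuousOn_comparisonQuotient ht hγ hγpos hF).sub
      (hycont.div hγ fun s hs => (hγpos s hs).ne'))
    ((continuousOn_weightedMass ht hγ hF).neg.sub
      ((hy'cont.mul hγ).sub (hycont.mul hγd'.continuous.continuousOn)))
    (fun x hx => ?_) (fun x hx => pow_pos (hγpos x (Ioo_subset_Icc_self hx)) 2)
    (fun x hx => ?_) (fun x hx hwx => ?_) ?_ ?_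
  · intro s hs
    have := hw_nonneg s hs
    rw [sub_nonneg, div_le_iff₀ (hγpos s hs)] at this
    linarith
  · refine ((hasDerivAt_comparisonQuotient hγ hγpos hF hx).sub
      ((hy x (Ioo_subset_Icc_self hx)).div (hγd x).hasDerivAt
        (hγpos x (Ioo_subset_Icc_self hx)).ne')).congr_deriv ?_
    field_simp
    ring
  · refine ((hasDerivAt_weightedMass hγ hF hx).neg.sub
      (((hy' x (Ioo_subset_Icc_self hx)).mul (hγd x).hasDerivAt).sub
        ((hy x (Ioo_subset_Icc_self hx)).mul (hγd' x).hasDerivAt))).congr_deriv ?_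
    ring
  · have hγx := hγpos x (Ioo_subset_Icc_self hx)
    have hyx : 0 < y x := (div_pos_iff_of_pos_right hγx).1
      (by linarith [comparisonQuotient_nonneg (F := F) hγpos (Ioo_subset_Icc_self hx)])
    have hγh : 0 ≤ γ x * h x - deriv (deriv γ) x := by
      nlinarith [(le_div_iff₀ hγx).1 (hbound x (Ioo_subset_Icc_self hx)), neg_abs_le (h x)]
    have hF : 0 ≤ |F x| + F x := by linarith [neg_abs_le (F x)]
    nlinarith [mul_nonneg hγx.le hF, mul_nonneg hyx.le hγh]
  · simp [show M 0 = 0 from integral_same, hinit, hγ0]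
  · simp [show V t = 0 from integral_same, hend]

theorem abs_le_mul_comparisonQuotient (ht : 0 ≤ t) (hγd : Differentiable ℝ γ)
    (hγd' : Differentiable ℝ (deriv γ)) (hγpos : ∀ s ∈ Icc 0 t, 0 < γ s)
    (hγ0 : deriv γ 0 = γ 0) (hF : ContinuousOn F (Icc 0 t))
    (hbound : ∀ s ∈ Icc 0 t, |h s| ≤ -deriv (deriv γ) s / γ s)
    (hy : ∀ s ∈ Icc 0 t, HasDerivAt y (y' s) s)
    (hy' : ∀ s ∈ Icc 0 t, HasDerivAt y' (h s * y s + F s) s)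
    (hinit : y 0 = y' 0) (hend : y t = 0) :
    ∀ s ∈ Icc 0 t, |y s| ≤ γ s * comparisonQuotient γ F t s := by
  have hneg : comparisonQuotient γ (fun s => -F s) t = comparisonQuotient γ F t := by
    unfold comparisonQuotient weightedMass
    simp only [abs_neg]
  intro s hs
  have hupper := le_mul_comparisonQuotient ht hγd hγd' hγpos hγ0 hF hbound hy hy' hinit hend s hs
  have hlower := le_mul_comparisonQuotient (F := fun s => -F s) (y := fun s => -y s)
    (y' := fun s => -y' s) ht hγd hγd' hγpos hγ0 hF.neg hbound (fun s hs => (hy s hs).neg)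
    (fun s hs => (hy' s hs).neg.congr_deriv (by ring)) (by simp [hinit]) (by simp [hend]) s hs
  rw [hneg] at hlower
  exact abs_le.2 ⟨by linarith, hupper⟩

end Solution

theorem inhomogeneous_ode_estimate
    (γ : ℝ → ℝ) (hγC2 : ContDiff ℝ 2 γ)
    (hγpos : ∀ s : ℝ, 0 ≤ s → 0 < γ s)
    (hγ0 : γ 0 = 1) (hγ'0 : deriv γ 0 = 1)
    (hγ'' : ∀ s : ℝ, 0 ≤ s → deriv (deriv γ) s < 0)
    (t : ℝ) (ht : 0 < t)
    (h F y y' : ℝ → ℝ)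
    (hFcont : ContinuousOn F (Set.Icc 0 t))
    (hbound : ∀ s ∈ Set.Icc 0 t, |h s| ≤ -(deriv (deriv γ) s) / γ s)
    (hy : ∀ s ∈ Set.Icc 0 t, HasDerivAt y (y' s) s)
    (hy' : ∀ s ∈ Set.Icc 0 t, HasDerivAt y' (h s * y s + F s) s)
    (hinit : y 0 = y' 0) (hend : y t = 0) :
    (∀ s ∈ Set.Icc 0 t, |y s| / γ s ≤ ∫ τ in (0 : ℝ)..t, |F τ| * ((t - τ) / γ t)) ∧
    (∀ s ∈ Set.Ico 0 t, |y s| / (t - s) ≤ ∫ τ in (0 : ℝ)..t, |F τ| * (γ τ / γ t)) := by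
  have hγd : Differentiable ℝ γ := hγC2.differentiable (by norm_num)
  have hγ : ContinuousOn γ (Icc 0 t) := hγd.continuous.continuousOn
  have hγpos' : ∀ s ∈ Icc 0 t, 0 < γ s := fun s hs => hγpos s hs.1
  have hconcave : ConcaveOn ℝ (Icc 0 t) γ :=
    concaveOn_of_deriv2_nonpos (convex_Icc 0 t) hγ hγd.differentiableOn
      hγC2.differentiable_deriv_two.differentiableOn fun x hx => by
        rw [interior_Icc] at hx
        simpa using (hγ'' x hx.1.le).le
  have hγQ : ∀ s ∈ Icc 0 t, γ s * ∫ r in s..t, (γ r ^ 2)⁻¹ ≤ (t - s) / γ t := fun s hs =>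
    mul_integral_inv_sq_le_of_concaveOn hs.2
      (hconcave.subset (Icc_subset_Icc hs.1 le_rfl) (convex_Icc s t)) hγd.differentiableOn
      fun x hx => hγpos' x ⟨hs.1.trans hx.1, hx.2⟩
  have habs := abs_le_mul_comparisonQuotient ht.le hγd hγC2.differentiable_deriv_two hγpos'
    (hγ'0.trans hγ0.symm) hFcont hbound hy hy' hinit hend
  refine ⟨fun s hs => ?_, fun s hs => ?_⟩
  · rw [div_le_iff₀ (hγpos' s hs), mul_comm]
    exact (habs s hs).trans (mul_le_mul_of_nonneg_left
      (comparisonQuotient_le_integral ht.le hγ hγpos' hFcont hγQ hs) (hγpos' s hs).le)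
  · rw [div_le_iff₀ (sub_pos.2 hs.2)]
    exact (habs s (Ico_subset_Icc_self hs)).trans
      (mul_comparisonQuotient_le ht.le hγ hγpos' hFcont hγQ (Ico_subset_Icc_self hs))
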